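/- Let R = ℂ[t^α | 0 < α ∈ ℝ] and let N = R/(ℂ·t + R·t), the quotient of R by the subspace spanned by t together with all products r·t (N has basis t^α for α ∈ (0,1)). Then the canonical map R ⊗_R N → N is surjective but not injective: the class of t^{1/2} ⊗ t^{1/2} is a nonzero element of its kernel. In particular N is not a smooth R-module. -/

import Mathlib

/-!
The class of `t^{1/2} ⊗ t^{1/2}` is detected by the functional `r ⊗ [x] ↦ (coefficient of t¹ in
x r)` on `R ⊗ N`. It is well defined because `t¹` never occurs in a multiple of `t` (exponents are
positive), and it kills the bar relations `ab ⊗ n - a ⊗ bn` by associativity and commutativity;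
yet it takes the value `1` on `t^{1/2} ⊗ t^{1/2}`, whose image `t` in `N` is zero. Surjectivity
holds because every `t^α` is the product `t^{α/2} t^{α/2}`.
-/

open TensorProduct LinearMap

/-- The additive semigroup of positive real exponents. -/
abbrev PosReal := {x : ℝ // 0 < x}

/-- `R = ℂ[t^α | 0 < α ∈ ℝ]`. -/
abbrev Rpos := AddMonoidAlgebra ℂ PosReal

/-- The element `t = t^1`. -/
noncomputable def tElt : Rpos := AddMonoidAlgebra.single ⟨1, one_pos⟩ 1

/-- The element `t^{1/2}`. -/
noncomputable def tHalf : Rpos := AddMonoidAlgebra.single ⟨1/2, by norm_num⟩ 1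

/-- The subspace `ℂ·t + R·t` of `R`. -/
noncomputable def Jsub : Submodule ℂ Rpos :=
  Submodule.span ℂ ({tElt} ∪ Set.range fun r : Rpos => r * tElt)

/-- `N = R/(ℂ·t + R·t)`, the maximal quotient of `R` in which `t` acts as `0`. -/
noncomputable abbrev Nquot := Rpos ⧸ Jsub

/-- The bar differential `R ⊗ R ⊗ N → R ⊗ N` for a module structure given by a
bilinear action map `act`. -/
noncomputable def barDM (act : Rpos →ₗ[ℂ] Nquot →ₗ[ℂ] Nquot) :
    (Rpos ⊗[ℂ] (Rpos ⊗[ℂ] Nquot)) →ₗ[ℂ] Rpos ⊗[ℂ] Nquot :=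
  (rTensor Nquot (mul' ℂ Rpos)) ∘ₗ (TensorProduct.assoc ℂ Rpos Rpos Nquot).symm.toLinearMap
    - lTensor Rpos (TensorProduct.lift act)

namespace AddMonoidAlgebra

theorem mul'_surjective_of_forall_exists_add {k G : Type*} [CommSemiring k] [AddSemigroup G]
    (h : ∀ a : G, ∃ b c, b + c = a) :
    Function.Surjective (LinearMap.mul' k (AddMonoidAlgebra k G)) := by
  rw [← LinearMap.range_eq_top, Submodule.eq_top_iff']
  intro x
  induction x using AddMonoidAlgebra.induction_linear with
  | zero => exact zero_mem _
  | add x y hx hy => exact add_mem hx hy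
  | single a c =>
    obtain ⟨b, b', rfl⟩ := h a
    exact ⟨single b c ⊗ₜ single b' 1, by simp [single_mul_single]⟩

end AddMonoidAlgebra

noncomputable def coeffOne : Rpos →ₗ[ℂ] ℂ :=
  Finsupp.lapply ⟨1, one_pos⟩ ∘ₗ (AddMonoidAlgebra.coeffLinearEquiv ℂ).toLinearMap

theorem coeffOne_mul_tElt (x : Rpos) : coeffOne (x * tElt) = 0 :=
  AddMonoidAlgebra.coeff_mul_single_of_forall_add_ne _ _ fun a h =>
    a.2.ne' (by simpa using congrArg Subtype.val h)

theorem tHalf_mul_tHalf : tHalf * tHalf = tElt := by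
  rw [tHalf, tElt, AddMonoidAlgebra.single_mul_single, one_mul]
  congr 1
  exact Subtype.ext (add_halves 1)

theorem tElt_mem_Jsub : tElt ∈ Jsub :=
  Submodule.subset_span (Or.inl rfl)

theorem Jsub_le_ker_coeffOne_mul : Jsub ≤ ker ((LinearMap.mul ℂ Rpos).compr₂ coeffOne) := by
  rw [Jsub, Submodule.span_le]
  rintro _ (rfl | ⟨s, rfl⟩) <;> refine LinearMap.ext fun r => ?_
  · simpa [mul_comm] using coeffOne_mul_tElt r
  · simpa [mul_right_comm] using coeffOne_mul_tElt (s * r)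

noncomputable def residuePairing : Nquot →ₗ[ℂ] Rpos →ₗ[ℂ] ℂ :=
  Jsub.liftQ _ Jsub_le_ker_coeffOne_mul

noncomputable def residue : Rpos ⊗[ℂ] Nquot →ₗ[ℂ] ℂ :=
  lift residuePairing.flip

theorem residue_tmul (r x : Rpos) : residue (r ⊗ₜ Jsub.mkQ x) = coeffOne (x * r) := rfl

theorem residue_tHalf_tmul : residue (tHalf ⊗ₜ Jsub.mkQ tHalf) = 1 := by
  rw [residue_tmul, tHalf_mul_tHalf]
  exact Finsupp.single_eq_same

section Action

variable {act : Rpos →ₗ[ℂ] Nquot →ₗ[ℂ] Nquot}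
  (hact : ∀ (r x : Rpos), act r (Jsub.mkQ x) = Jsub.mkQ (r * x))
include hact

theorem residue_comp_barDM : residue ∘ₗ barDM act = 0 := by
  refine TensorProduct.ext_threefold' fun a b n => ?_
  obtain ⟨x, rfl⟩ := Jsub.mkQ_surjective n
  simp only [barDM, LinearMap.sub_apply, coe_comp, Function.comp_apply, LinearEquiv.coe_coe,
    assoc_symm_tmul, rTensor_tmul, lTensor_tmul, mul'_apply, lift.tmul, hact, residue_tmul,
    LinearMap.zero_apply, map_sub]
  rw [mul_comm b x, mul_assoc, mul_comm b a, sub_self]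

theorem lift_comp_lTensor_mkQ : lift act ∘ₗ lTensor Rpos Jsub.mkQ = Jsub.mkQ ∘ₗ mul' ℂ Rpos := by
  refine TensorProduct.ext' fun r x => ?_
  simpa using hact r x

theorem lift_surjective : Function.Surjective (lift act) := by
  refine Function.Surjective.of_comp (g := lTensor Rpos Jsub.mkQ) ?_
  rw [← LinearMap.coe_comp, lift_comp_lTensor_mkQ hact, LinearMap.coe_comp]
  exact Jsub.mkQ_surjective.comp <| AddMonoidAlgebra.mul'_surjective_of_forall_exists_add
    fun a => ⟨⟨a / 2, half_pos a.2⟩, ⟨a / 2, half_pos a.2⟩, Subtype.ext (add_halves a.1)⟩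

end Action

/-- For `N = R/(ℂt + Rt)` over `R = ℂ[t^α | 0 < α ∈ ℝ]` (with the quotient action),
the canonical map `R ⊗_R N → N` is surjective but not injective: the class of
`t^{1/2} ⊗ t^{1/2}` is a nonzero element of its kernel.  In particular `N` is not a
smooth `R`-module. -/
theorem quotient_not_smooth (act : Rpos →ₗ[ℂ] Nquot →ₗ[ℂ] Nquot)
    (hact : ∀ (r x : Rpos), act r (Jsub.mkQ x) = Jsub.mkQ (r * x)) :
    ∀ f : ((Rpos ⊗[ℂ] Nquot) ⧸ LinearMap.range (barDM act)) →ₗ[ℂ] Nquot,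
      f ∘ₗ (LinearMap.range (barDM act)).mkQ = TensorProduct.lift act →
      Function.Surjective f ∧
      (LinearMap.range (barDM act)).mkQ (tHalf ⊗ₜ[ℂ] Jsub.mkQ tHalf) ≠ 0 ∧
      f ((LinearMap.range (barDM act)).mkQ (tHalf ⊗ₜ[ℂ] Jsub.mkQ tHalf)) = 0 ∧
      ¬ Function.Injective f ∧ ¬ Function.Bijective f := by
  intro f hf
  have hf_mkQ : ∀ y, f ((range (barDM act)).mkQ y) = lift act y := LinearMap.congr_fun hf
  have hsurj : Function.Surjective f :=
    Function.Surjective.of_comp (g := (range (barDM act)).mkQ) <| by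
      rw [← LinearMap.coe_comp, hf]
      exact lift_surjective hact
  have hker : f ((range (barDM act)).mkQ (tHalf ⊗ₜ Jsub.mkQ tHalf)) = 0 := by
    rw [hf_mkQ, lift.tmul, hact, tHalf_mul_tHalf]
    exact (Submodule.Quotient.mk_eq_zero _).mpr tElt_mem_Jsub
  have hne : (range (barDM act)).mkQ (tHalf ⊗ₜ Jsub.mkQ tHalf) ≠ 0 := by
    rw [Submodule.mkQ_apply, Ne, Submodule.Quotient.mk_eq_zero]
    rintro ⟨z, hz⟩
    have := LinearMap.congr_fun (residue_comp_barDM hact) z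
    rw [coe_comp, Function.comp_apply, hz, residue_tHalf_tmul, LinearMap.zero_apply] at this
    exact one_ne_zero this
  have hninj : ¬ Function.Injective f := fun hinj => hne (hinj (hker.trans (map_zero f).symm))
  exact ⟨hsurj, hne, hker, hninj, fun hbij => hninj hbij.1⟩
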